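/- arXiv:1703.02290 — 2 statements merged into one kernel-verified Lean document; each statement's English description precedes it below -/
import Mathlib

section
/- Let p be an odd prime and G ≅ Z_p³. Then there exists a proper Cayley digraph Γ on G such that the Cayley index of Γ is exactly p and Aut(Γ) contains a nonabelian regular subgroup. -/
/-- The automorphism group of a digraph given by an adjacency relation. -/
def dAut {V : Type*} (adj : V → V → Prop) : Subgroup (Equiv.Perm V) where
  carrier := {σ | ∀ u v : V, adj (σ u) (σ v) ↔ adj u v}
  one_mem' := by intro u v; rfl
  mul_mem' := by
    intro a b ha hb u v
    simp only [Set.mem_setOf_eq] at *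
    rw [Equiv.Perm.mul_apply, Equiv.Perm.mul_apply, ha, hb]
  inv_mem' := by
    intro a ha u v
    simpa using (ha (a⁻¹ u) (a⁻¹ v)).symm

/-- Adjacency of the Cayley digraph `Cay(G,S)`. -/
def cayAdj (G : Type*) [Group G] (S : Set G) : G → G → Prop :=
  fun u v => v * u⁻¹ ∈ S

/-- The right regular representation of `G` in `Equiv.Perm G`. -/
def rightReg (G : Type*) [Group G] : G →* Equiv.Perm G where
  toFun g := Equiv.mulRight g⁻¹
  map_one' := by ext x; simp
  map_mul' := by intro a b; ext x; simp [mul_assoc]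

/-- The right regular representation of `G` as a subgroup of `Aut(Cay(G,S))`. -/
def cayleyRR (G : Type*) [Group G] (S : Set G) :
    Subgroup (dAut (cayAdj G S)) :=
  ((rightReg G).range).subgroupOf (dAut (cayAdj G S))

/-- A subgroup of `Equiv.Perm V` is regular if it is sharply transitive on `V`. -/
def IsRegularSub {V : Type*} (H : Subgroup (Equiv.Perm V)) : Prop :=
  ∀ v w : V, ∃! h : H, (h : Equiv.Perm V) v = w

/-- Adjacency of the cartesian product of two digraphs. -/
def cartAdj {α β : Type*} (adjG : α → α → Prop) (adjD : β → β → Prop) :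
    α × β → α × β → Prop :=
  fun u v => (u.1 = v.1 ∧ adjD u.2 v.2) ∨ (u.2 = v.2 ∧ adjG u.1 v.1)

/-- `pathLe adj i u v` : there is a directed path of length at most `i` from `u` to `v`. -/
def pathLe {V : Type*} (adj : V → V → Prop) : ℕ → V → V → Prop
  | 0, u, v => u = v
  | (n+1), u, v => pathLe adj n u v ∨ ∃ w, pathLe adj n u w ∧ adj w v

/-!
In coordinates `(a, b, c) ↔ x ^ a * y ^ b * z ^ c`, identifying `G` with `𝔽_p³`, the
automorphism `α` is the shear `(a, b, c) ↦ (a, b + a, c + b)` and the connection set is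
`S = {α^t x} ∪ {α^t y}`. Since `S` is `α`-invariant, `⟨α⟩ ≅ ℤ/p` lies in the stabiliser of `0`
in `Aut Γ`. Conversely, an automorphism fixing `0` permutes `S` and must send `x` to some `α^k x`
(the `α^t y` are the elements of `S` without an in-neighbour in `S`). After composing with
`α^(-k)` it fixes `0` and `x`, and fixed points propagate because certain pairs of vertices have
a unique common out-neighbour: first along the `α^t x` (and hence the `α^t y`), then across the
plane `a = 1`, and then from each plane `a` to the plane `a + 1`. So the stabiliser is `⟨α⟩`, and
the Cayley index is `p`. The maps `w ↦ α^(v.1) w + v` form a regular subgroup of `Aut Γ`. It is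
nonabelian because `α` does not commute with the translation by `y`.
-/

lemma apply_eq_of_adj_of_adj {α : Type*} {adj : α → α → Prop} {σ : Equiv.Perm α}
    (hσ : σ ∈ dAut adj) {u v w : α} (hu : σ u = u) (hv : σ v = v) (huw : adj u w)
    (hvw : adj v w) (huniq : ∀ w', adj u w' → adj v w' → w' = w) : σ w = w := by
  refine huniq _ ?_ ?_
  · simpa only [hu] using (hσ u w).mpr huw
  · simpa only [hv] using (hσ v w).mpr hvw

section Transport

variable {α β : Type*} {adjA : α → α → Prop} {adjB : β → β → Prop} (e : α ≃ β)

lemma permCongr_mem_dAut_iff (he : ∀ u v, adjB (e u) (e v) ↔ adjA u v) {σ : Equiv.Perm α} :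
    e.permCongr σ ∈ dAut adjB ↔ σ ∈ dAut adjA := by
  refine ⟨fun h u v => ?_, fun h x y => ?_⟩
  · simpa [he] using h (e u) (e v)
  · conv_rhs => rw [← e.apply_symm_apply x, ← e.apply_symm_apply y]
    simp only [Equiv.permCongr_apply, he, h _ _]

lemma card_stabilizer_dAut_congr (he : ∀ u v, adjB (e u) (e v) ↔ adjA u v) (a : α) :
    Nat.card (MulAction.stabilizer (dAut adjA) a) =
      Nat.card (MulAction.stabilizer (dAut adjB) (e a)) := by
  have he' : ∀ x y, adjA (e.symm x) (e.symm y) ↔ adjB x y := fun x y => by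
    simpa using (he (e.symm x) (e.symm y)).symm
  refine Nat.card_congr
    { toFun σ := ⟨⟨e.permCongr σ.1.1, (permCongr_mem_dAut_iff e he).mpr σ.1.2⟩, ?_⟩
      invFun τ := ⟨⟨e.symm.permCongr τ.1.1, (permCongr_mem_dAut_iff e.symm he').mpr τ.1.2⟩, ?_⟩
      left_inv σ := by ext; simp
      right_inv τ := by ext; simp }
  · show e (σ.1.1 (e.symm (e a))) = e a
    rw [e.symm_apply_apply]
    exact congrArg e σ.2
  · show e.symm (τ.1.1 (e a)) = a
    rw [show τ.1.1 (e a) = e a from τ.2, e.symm_apply_apply]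

lemma IsRegularSub.comap_permCongrHom {H : Subgroup (Equiv.Perm β)} (hH : IsRegularSub H) :
    IsRegularSub (H.comap e.permCongrHom.toMonoidHom) := by
  intro v w
  obtain ⟨⟨τ, hτ⟩, hτv, huniq⟩ := hH (e v) (e w)
  have hmem : e.symm.permCongr τ ∈ H.comap e.permCongrHom.toMonoidHom := by
    rw [Subgroup.mem_comap]
    convert hτ
    ext; simp [Equiv.permCongrHom_coe]
  refine ⟨⟨_, hmem⟩, by simp [hτv], fun ⟨σ, hσ⟩ hσv => Subtype.ext ?_⟩
  have hστ : e.permCongr σ = τ := congrArg Subtype.val (huniq ⟨e.permCongr σ, hσ⟩ (by simp [← hσv]))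
  change σ = e.symm.permCongr τ
  rw [← hστ]
  ext; simp

lemma comap_permCongrHom_le_dAut (he : ∀ u v, adjB (e u) (e v) ↔ adjA u v)
    {H : Subgroup (Equiv.Perm β)} (hH : H ≤ dAut adjB) :
    H.comap e.permCongrHom.toMonoidHom ≤ dAut adjA :=
  fun _ hσ => (permCongr_mem_dAut_iff e he).mp (hH hσ)

end Transport

lemma Subgroup.not_comm_comap {G G' : Type*} [Group G] [Group G'] (f : G ≃* G')
    {H : Subgroup G'} (hH : ¬ ∀ a ∈ H, ∀ b ∈ H, a * b = b * a) :
    ¬ ∀ a ∈ H.comap f.toMonoidHom, ∀ b ∈ H.comap f.toMonoidHom, a * b = b * a := by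
  refine fun hcomm => hH fun a ha b hb => f.symm.injective ?_
  simpa using hcomm (f.symm a) (by simpa using ha) (f.symm b) (by simpa using hb)

section Cayley

variable {G : Type*} [Group G]

lemma rightReg_mem_dAut (S : Set G) (g : G) : rightReg G g ∈ dAut (cayAdj G S) := by
  intro u v
  simp [rightReg, cayAdj, mul_assoc]

lemma rightReg_injective : Function.Injective (rightReg G) := by
  intro a b h
  simpa [rightReg] using congrArg (fun σ => σ 1) h

lemma index_cayleyRR_eq_card_stabilizer [Finite G] (S : Set G) :
    (cayleyRR G S).index = Nat.card (MulAction.stabilizer (dAut (cayAdj G S)) (1 : G)) := by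
  have hle : (rightReg G).range ≤ dAut (cayAdj G S) := by
    rintro _ ⟨g, rfl⟩
    exact rightReg_mem_dAut S g
  have hcard : Nat.card (cayleyRR G S) = Nat.card G :=
    (Nat.card_congr (Subgroup.subgroupOfEquivOfLe hle).toEquiv).trans
      (Nat.card_congr (MonoidHom.ofInjective rightReg_injective).toEquiv).symm
  have : MulAction.IsPretransitive (dAut (cayAdj G S)) G :=
    ⟨fun x y => ⟨⟨rightReg G (y⁻¹ * x), rightReg_mem_dAut S _⟩,
      by simp [rightReg, Subgroup.smul_def]⟩⟩
  have h1 := (cayleyRR G S).card_mul_index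
  have h2 := (MulAction.stabilizer (dAut (cayAdj G S)) (1 : G)).index_mul_card
  rw [MulAction.index_stabilizer_of_transitive, ← h1, hcard] at h2
  exact (Nat.eq_of_mul_eq_mul_left Nat.card_pos h2).symm

lemma cayAdj_preimage_iff {A : Type*} [AddGroup A] (e : Additive G ≃+ A) (T : Set A) (u v : G) :
    cayAdj G {g | e (.ofMul g) ∈ T} u v ↔ e (.ofMul v) - e (.ofMul u) ∈ T := by
  simp [cayAdj, ← map_sub, ← div_eq_mul_inv]

end Cayley

lemma nonempty_addEquiv_of_card_eq {p : ℕ} [Fact p.Prime] {A B : Type*} [AddCommGroup A]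
    [AddCommGroup B] [Finite A] [Finite B] (hA : ∀ a : A, p • a = 0) (hB : ∀ b : B, p • b = 0)
    (hcard : Nat.card A = Nat.card B) : Nonempty (A ≃+ B) := by
  -- `have`, not `let`: unfolding `zmodModule`, defined by cases on `p`, gets instance search stuck
  have := AddCommGroup.zmodModule hA
  have := AddCommGroup.zmodModule hB
  have : Module.Finite (ZMod p) A := .of_finite
  have : Module.Finite (ZMod p) B := .of_finite
  have hrank : Module.finrank (ZMod p) A = Module.finrank (ZMod p) B := by
    rw [Module.natCard_eq_pow_finrank (K := ZMod p) (V := A),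
      Module.natCard_eq_pow_finrank (K := ZMod p) (V := B), Nat.card_zmod] at hcard
    exact Nat.pow_right_injective (Fact.out : p.Prime).two_le hcard
  exact ⟨(FiniteDimensional.nonempty_linearEquiv_of_finrank_eq hrank).some.toAddEquiv⟩

lemma ZMod.induction_on_add_one {n : ℕ} [NeZero n] {P : ZMod n → Prop} (h0 : P 0)
    (hs : ∀ t, P t → P (t + 1)) (t : ZMod n) : P t := by
  obtain ⟨m, rfl⟩ := ZMod.natCast_zmod_surjective t
  induction m with
  | zero => simpa using h0
  | succ m ih => simpa using hs _ ih

namespace ShearCayley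

variable {R : Type*} [CommRing R] [Invertible (2 : R)]

def choose2 (t : R) : R := ⅟2 * (t * (t - 1))

lemma choose2_add (s t : R) : choose2 (s + t) = choose2 s + choose2 t + s * t := by
  unfold choose2
  linear_combination (s * t) * invOf_mul_self (2 : R)

@[simp] lemma choose2_zero : choose2 (0 : R) = 0 := by simp [choose2]

@[simp] lemma choose2_one : choose2 (1 : R) = 0 := by simp [choose2]

lemma choose2_neg (t : R) : choose2 (-t) = t ^ 2 - choose2 t := by
  have := choose2_add t (-t)
  rw [add_neg_cancel, choose2_zero] at this
  linear_combination -this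

/-- With `(a, b, c)` standing for `x ^ a * y ^ b * z ^ c`, `shear k` is `α ^ k`, where
`α : (x, y, z) ↦ (x * y, y * z, z)`. -/
def shear (k : R) : (R × R × R) ≃+ (R × R × R) where
  toFun w := (w.1, w.2.1 + k * w.1, w.2.2 + k * w.2.1 + choose2 k * w.1)
  invFun w := (w.1, w.2.1 - k * w.1, w.2.2 - k * w.2.1 + choose2 (-k) * w.1)
  left_inv w := by
    ext <;> simp [choose2_neg]
    ring
  right_inv w := by
    ext <;> simp [choose2_neg]
    ring
  map_add' u v := by ext <;> dsimp only [Prod.fst_add, Prod.snd_add] <;> ring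

lemma shear_apply (k : R) (w : R × R × R) :
    shear k w = (w.1, w.2.1 + k * w.1, w.2.2 + k * w.2.1 + choose2 k * w.1) := rfl

@[simp] lemma fst_shear (k : R) (w : R × R × R) : (shear k w).1 = w.1 := rfl

lemma shear_shear (j k : R) (w : R × R × R) : shear j (shear k w) = shear (j + k) w := by
  simp only [shear_apply, choose2_add, Prod.mk.injEq, true_and]
  constructor <;> ring

lemma shear_zero (w : R × R × R) : shear 0 w = w := by simp [shear_apply]

/-- `orbX t = α ^ t x` and `orbY t = α ^ t y`. -/
def orbX (t : R) : R × R × R := (1, t, choose2 t)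

def orbY (t : R) : R × R × R := (0, 1, t)

lemma shear_orbX (k t : R) : shear k (orbX t) = orbX (t + k) := by
  simp only [shear_apply, orbX, choose2_add, Prod.mk.injEq, true_and]
  constructor <;> ring

lemma shear_orbY (k t : R) : shear k (orbY t) = orbY (t + k) := by
  simp only [shear_apply, orbY, Prod.mk.injEq, true_and]
  constructor <;> ring

variable (R) in
def conn : Set (R × R × R) := Set.range orbX ∪ Set.range orbY

def adj (u v : R × R × R) : Prop := v - u ∈ conn R

lemma mem_conn_iff {w : R × R × R} :
    w ∈ conn R ↔ (w.1 = 1 ∧ w.2.2 = choose2 w.2.1) ∨ (w.1 = 0 ∧ w.2.1 = 1) := by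
  constructor
  · rintro (⟨t, rfl⟩ | ⟨t, rfl⟩)
    exacts [Or.inl ⟨rfl, rfl⟩, Or.inr ⟨rfl, rfl⟩]
  · rintro (⟨h1, h3⟩ | ⟨h1, h2⟩)
    · exact Or.inl ⟨w.2.1, by simp [orbX, ← h1, ← h3]⟩
    · exact Or.inr ⟨w.2.2, by simp [orbY, ← h1, ← h2]⟩

lemma shear_mem_conn (k : R) {w : R × R × R} (hw : w ∈ conn R) : shear k w ∈ conn R := by
  rcases hw with ⟨t, rfl⟩ | ⟨t, rfl⟩
  · exact Or.inl ⟨t + k, (shear_orbX k t).symm⟩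
  · exact Or.inr ⟨t + k, (shear_orbY k t).symm⟩

lemma adj_shear_iff (k : R) {u v : R × R × R} : adj (shear k u) (shear k v) ↔ adj u v := by
  unfold adj
  rw [← map_sub]
  refine ⟨fun h => ?_, shear_mem_conn k⟩
  simpa only [shear_shear, neg_add_cancel, shear_zero] using shear_mem_conn (-k) h

lemma adj_add_right_iff {u v : R × R × R} (w : R × R × R) : adj (u + w) (v + w) ↔ adj u v := by
  unfold adj
  rw [add_sub_add_right_eq_sub]

lemma adj_zero_left {w : R × R × R} : adj 0 w ↔ w ∈ conn R := by
  rw [adj, sub_zero]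

section Nontrivial

variable [Nontrivial R]

lemma neg_one_ne_zero_and_ne_one : (-1 : R) ≠ 0 ∧ (-1 : R) ≠ 1 := by
  refine ⟨neg_ne_zero.mpr one_ne_zero, fun h => Invertible.ne_zero (2 : R) ?_⟩
  linear_combination -h

lemma zero_notMem_conn : (0 : R × R × R) ∉ conn R := by
  simp [mem_conn_iff]

lemma eq_add_orbX_of_adj_of_adj {u v w : R × R × R} (huv : (v - u).1 = 1) (hu : adj u w)
    (hv : adj v w) : w = u + orbX ((v - u).2.1 + 1) := by
  have hwv : w - v = (w - u) - (v - u) := by abel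
  rw [adj, hwv] at hv
  rcases hu with ⟨t, ht⟩ | ⟨t, ht⟩ <;> rw [← ht, mem_conn_iff] at hv <;>
    simp only [orbX, orbY, Prod.fst_sub, Prod.snd_sub, huv] at hv
  · rcases hv with ⟨h, -⟩ | ⟨-, h⟩
    · exact absurd h (by simp)
    · have htv : t = (v - u).2.1 + 1 := by
        rw [Prod.snd_sub, Prod.fst_sub]; linear_combination h
      rw [← htv, ht]; abel
  · rcases hv with ⟨h, -⟩ | ⟨h, -⟩ <;> rw [zero_sub] at h
    exacts [absurd h neg_one_ne_zero_and_ne_one.2, absurd h neg_one_ne_zero_and_ne_one.1]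

lemma eq_add_orbX_zero_of_adj_of_adj {u w : R × R × R} (hu : adj u w)
    (hv : adj (u - orbY 0) w) : w = u + orbX 0 := by
  have hwv : w - (u - orbY 0) = (w - u) + orbY 0 := by abel
  rw [adj, hwv] at hv
  rcases hu with ⟨t, ht⟩ | ⟨t, ht⟩ <;> rw [← ht, mem_conn_iff] at hv <;>
    simp only [orbX, orbY, Prod.fst_add, Prod.snd_add] at hv
  · rcases hv with ⟨-, h⟩ | ⟨h, -⟩
    · have ht0 : t = 0 := by
        rw [choose2_add, choose2_one] at h
        linear_combination -h
      rw [ht0] at ht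
      rw [ht]; abel
    · exact absurd h (by simp)
  · rcases hv with ⟨h, -⟩ | ⟨-, h⟩
    · exact absurd h (by simp)
    · exact absurd (by linear_combination h) (one_ne_zero (α := R))

lemma not_adj_orbY {s : R × R × R} (hs : s ∈ conn R) (t : R) : ¬ adj s (orbY t) := by
  rw [adj, mem_conn_iff]
  rcases hs with ⟨u, rfl⟩ | ⟨u, rfl⟩ <;> simp only [orbX, orbY, Prod.fst_sub, Prod.snd_sub]
  · rw [zero_sub]
    rintro (⟨h, -⟩ | ⟨h, -⟩)
    exacts [neg_one_ne_zero_and_ne_one.2 h, neg_one_ne_zero_and_ne_one.1 h]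
  · simp

lemma eq_orbY_or_eq_orbX_of_adj {s : R × R × R} {t : R} (hs : s ∈ conn R)
    (h : adj s (orbX (t + 1))) : s = orbY t ∨ s = orbX t := by
  rw [adj, mem_conn_iff] at h
  rcases hs with ⟨u, rfl⟩ | ⟨u, rfl⟩ <;> simp only [orbX, orbY, Prod.fst_sub, Prod.snd_sub] at h
  · rcases h with ⟨h, -⟩ | ⟨-, h⟩
    · exact absurd h (by simp)
    · right; congr; linear_combination -h
  · rcases h with ⟨-, h⟩ | ⟨h, -⟩
    · left; congr
      rw [add_sub_cancel_right, choose2_add, choose2_one] at h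
      linear_combination -h
    · exact absurd h (by simp)

end Nontrivial

lemma adj_orbX_orbX_add_one (t : R) : adj (orbX t) (orbX (t + 1)) := by
  refine Or.inr ⟨t, ?_⟩
  simp only [orbX, orbY, Prod.mk_sub_mk, choose2_add, choose2_one, Prod.mk.injEq]
  ring_nf; simp

lemma adj_orbY_orbX_add_one (t : R) : adj (orbY t) (orbX (t + 1)) := by
  refine Or.inl ⟨t, ?_⟩
  simp only [orbX, orbY, Prod.mk_sub_mk, choose2_add, choose2_one, Prod.mk.injEq]
  ring_nf; simp

lemma shear_mem_dAut (k : R) : (shear k).toEquiv ∈ dAut (adj (R := R)) :=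
  fun _ _ => adj_shear_iff k

section Rigidity

variable {τ : Equiv.Perm (R × R × R)} (hτ : τ ∈ dAut adj)
include hτ

lemma apply_mem_conn (h0 : τ 0 = 0) {s : R × R × R} (hs : s ∈ conn R) : τ s ∈ conn R := by
  rw [← adj_zero_left, ← h0]
  exact (hτ 0 s).mpr (adj_zero_left.mpr hs)

variable [Nontrivial R]

lemma apply_eq_of_fst_eq_add_one {x : R} (hx : ∀ w : R × R × R, w.1 = x → τ w = w)
    {w : R × R × R} (hw : w.1 = x + 1) : τ w = w := by
  set u := w - orbX 0
  have hu : adj u w := by simp [u, adj, conn]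
  have hv : adj (u - orbY 0) w := by
    refine Or.inl ⟨1, ?_⟩
    ext <;> simp [u, orbX, orbY]
  refine apply_eq_of_adj_of_adj hτ (hx _ (by simp [u, orbX, hw]))
    (hx _ (by simp [u, orbX, orbY, hw])) hu hv fun w' hu' hv' => ?_
  rw [eq_add_orbX_zero_of_adj_of_adj hu' hv', eq_add_orbX_zero_of_adj_of_adj hu hv]

variable (h0 : τ 0 = 0) (hX : ∀ t, τ (orbX t) = orbX t)
include h0 hX

lemma apply_orbY_eq (t : R) : τ (orbY t) = orbY t := by
  have harc : adj (τ (orbY t)) (orbX (t + 1)) := by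
    rw [← hX (t + 1)]
    exact (hτ _ _).mpr (adj_orbY_orbX_add_one t)
  rcases eq_orbY_or_eq_orbX_of_adj (apply_mem_conn hτ h0 (Or.inr ⟨t, rfl⟩)) harc with h | h
  · exact h
  · rw [← hX t] at h
    have := congrArg Prod.fst (τ.injective h)
    simp [orbX, orbY] at this

/-- A point `w` with `w.1 = 1` is the only common out-neighbour of the two fixed points
`orbY (w.2.2 - choose2 (w.2.1 - 1))` and `orbX (w.2.1 - 1)`. -/
lemma apply_eq_of_fst_eq_one {w : R × R × R} (hw : w.1 = 1) : τ w = w := by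
  set u := orbY (w.2.2 - choose2 (w.2.1 - 1))
  set v := orbX (w.2.1 - 1)
  have huv : (v - u).1 = 1 := by simp [u, v, orbX, orbY]
  have hu : adj u w := by
    rw [adj, mem_conn_iff]; left
    simp [u, orbY, hw]
  have hv : adj v w := by
    rw [adj, mem_conn_iff]; right
    simp [v, orbX, hw]
  refine apply_eq_of_adj_of_adj hτ (apply_orbY_eq hτ h0 hX _) (hX _) hu hv fun w' hu' hv' => ?_
  rw [eq_add_orbX_of_adj_of_adj huv hu' hv', eq_add_orbX_of_adj_of_adj huv hu hv]

end Rigidity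

section ZMod

variable {n : ℕ} [NeZero n] [Invertible (2 : ZMod n)] [Nontrivial (ZMod n)]

lemma eq_one_of_mem_dAut {τ : Equiv.Perm (ZMod n × ZMod n × ZMod n)} (hτ : τ ∈ dAut adj)
    (h0 : τ 0 = 0) (hX0 : τ (orbX 0) = orbX 0) : τ = 1 := by
  have hX : ∀ t, τ (orbX t) = orbX t := by
    refine ZMod.induction_on_add_one hX0 fun t ht => ?_
    refine apply_eq_of_adj_of_adj hτ h0 ht (adj_zero_left.mpr (Or.inl ⟨_, rfl⟩))
      (adj_orbX_orbX_add_one t) fun w hw hw' => ?_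
    simpa [orbX] using eq_add_orbX_of_adj_of_adj (by simp [orbX]) hw hw'
  have hplanes : ∀ x : ZMod n, ∀ w : ZMod n × ZMod n × ZMod n, w.1 = 1 + x → τ w = w := by
    refine ZMod.induction_on_add_one ?_ fun x hx w hw => ?_
    · exact fun w hw => apply_eq_of_fst_eq_one hτ h0 hX (by simpa using hw)
    · exact apply_eq_of_fst_eq_add_one hτ hx (by rw [hw, add_assoc])
  exact Equiv.ext fun w => hplanes (w.1 - 1) w (by ring)

lemma exists_eq_shear {σ : Equiv.Perm (ZMod n × ZMod n × ZMod n)} (hσ : σ ∈ dAut adj)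
    (h0 : σ 0 = 0) : ∃ k, σ = (shear k).toEquiv := by
  obtain ⟨k, hk⟩ : ∃ k, σ (orbX 0) = orbX k := by
    rcases apply_mem_conn hσ h0 (Or.inl ⟨0, rfl⟩) with ⟨k, hk⟩ | ⟨k, hk⟩
    · exact ⟨k, hk.symm⟩
    · -- `orbX 0` has the in-neighbour `orbY (-1)` inside `conn`, an `orbY k` has none
      have harc := (hσ _ _).mpr (by simpa using adj_orbY_orbX_add_one (-1 : ZMod n))
      rw [← hk] at harc
      exact absurd harc (not_adj_orbY (apply_mem_conn hσ h0 (Or.inr ⟨_, rfl⟩)) k)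
  refine ⟨k, ?_⟩
  have hτ := eq_one_of_mem_dAut (mul_mem (shear_mem_dAut (-k)) hσ)
    (by simp [h0]) (by simp [hk, shear_orbX])
  refine (eq_inv_of_mul_eq_one_right hτ).trans (Equiv.ext fun w => ?_)
  rw [Equiv.Perm.inv_eq_iff_eq]
  simp [shear_shear, shear_zero]

lemma card_stabilizer_dAut_zero : Nat.card
    (MulAction.stabilizer (dAut (adj (R := ZMod n))) (0 : ZMod n × ZMod n × ZMod n)) = n := by
  let f : ZMod n → MulAction.stabilizer (dAut (adj (R := ZMod n))) (0 : ZMod n × ZMod n × ZMod n) :=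
    fun k => ⟨⟨(shear k).toEquiv, shear_mem_dAut k⟩, map_zero (shear k)⟩
  have hf : Function.Bijective f := by
    refine ⟨fun j k hjk => ?_, fun σ => ?_⟩
    · have h : shear j (orbY 0) = shear k (orbY 0) := congrArg (fun σ => σ.1.1 (orbY 0)) hjk
      rw [shear_orbY, shear_orbY] at h
      simpa [orbY] using h
    · obtain ⟨k, hk⟩ := exists_eq_shear σ.1.2 σ.2
      exact ⟨k, Subtype.ext (Subtype.ext hk.symm)⟩
  rw [← Nat.card_congr (Equiv.ofBijective f hf), Nat.card_zmod]

end ZMod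

def skewTranslation (v : R × R × R) : Equiv.Perm (R × R × R) :=
  (shear v.1).toEquiv.trans (Equiv.addRight v)

lemma skewTranslation_apply (v w : R × R × R) : skewTranslation v w = shear v.1 w + v := rfl

lemma skewTranslation_mul (u v : R × R × R) :
    skewTranslation u * skewTranslation v = skewTranslation (shear u.1 v + u) := by
  ext w : 1
  simp only [Equiv.Perm.mul_apply, skewTranslation_apply, map_add, shear_shear, Prod.fst_add,
    fst_shear]
  rw [add_comm v.1, add_assoc]

lemma skewTranslation_zero : skewTranslation (0 : R × R × R) = 1 := by
  ext w : 1
  simp [skewTranslation_apply, shear_zero]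

def skewTranslations : Subgroup (Equiv.Perm (R × R × R)) where
  carrier := Set.range skewTranslation
  one_mem' := ⟨0, skewTranslation_zero⟩
  mul_mem' := by
    rintro _ _ ⟨u, rfl⟩ ⟨v, rfl⟩
    exact ⟨_, (skewTranslation_mul u v).symm⟩
  inv_mem' := by
    rintro _ ⟨v, rfl⟩
    refine ⟨-shear (-v.1) v, eq_inv_of_mul_eq_one_left ?_⟩
    rw [skewTranslation_mul, Prod.fst_neg, fst_shear, add_neg_cancel, skewTranslation_zero]

lemma skewTranslations_le_dAut : skewTranslations ≤ dAut (adj (R := R)) := by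
  rintro _ ⟨v, rfl⟩ a b
  simp only [skewTranslation_apply, adj_add_right_iff, adj_shear_iff]

lemma isRegularSub_skewTranslations : IsRegularSub (skewTranslations (R := R)) := by
  intro v w
  have hfst : (w - shear (w.1 - v.1) v).1 = w.1 - v.1 := by simp
  refine ⟨⟨_, w - shear (w.1 - v.1) v, rfl⟩, ?_, ?_⟩
  · simp only [skewTranslation_apply, hfst]; abel
  · rintro ⟨_, u, rfl⟩ (hu : shear u.1 v + u = w)
    have hu1 : u.1 = w.1 - v.1 := by
      rw [← hu, Prod.fst_add, fst_shear]; ring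
    refine Subtype.ext (congrArg skewTranslation ?_)
    rw [← hu1, eq_sub_iff_add_eq', hu]

lemma not_comm_skewTranslations [Nontrivial R] :
    ¬ ∀ a ∈ skewTranslations (R := R), ∀ b ∈ skewTranslations (R := R), a * b = b * a := by
  intro h
  have := congrArg (fun σ => (σ 0).2.2) (h _ ⟨orbX 0, rfl⟩ _ ⟨orbY 0, rfl⟩)
  simp [skewTranslation_apply, shear_apply, orbX, orbY] at this

lemma exists_adj_not_adj [Nontrivial R] : ∃ u v : R × R × R, adj u v ∧ ¬ adj v u := by
  refine ⟨0, orbX 0, adj_zero_left.mpr (Or.inl ⟨0, rfl⟩), ?_⟩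
  rw [adj, zero_sub, mem_conn_iff]
  simp [orbX, neg_one_ne_zero_and_ne_one.1, neg_one_ne_zero_and_ne_one.2]

end ShearCayley

open ShearCayley in
/-- For `G ≅ Z_p³` (`p` an odd prime) there is a proper Cayley digraph on `G`
with Cayley index exactly `p` whose automorphism group contains a nonabelian
regular subgroup. -/
theorem stmt_10 {G : Type*} [CommGroup G] [Fintype G] (p : ℕ) (hp : p.Prime)
    (hodd : Odd p) (hcard : Nat.card G = p ^ 3) (hexp : ∀ g : G, g ^ p = 1) :
    ∃ S : Set G, (1 : G) ∉ S ∧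
      (∃ u v : G, cayAdj G S u v ∧ ¬ cayAdj G S v u) ∧
      (cayleyRR G S).index = p ∧
      ∃ H : Subgroup (Equiv.Perm G), H ≤ dAut (cayAdj G S) ∧ IsRegularSub H ∧
        ¬ ∀ a ∈ H, ∀ b ∈ H, a * b = b * a := by
  have : Fact p.Prime := ⟨hp⟩
  have h2 : (2 : ZMod p) ≠ 0 :=
    Ring.two_ne_zero (by rw [ZMod.ringChar_zmod_n]; rintro rfl; norm_num at hodd)
  have : Invertible (2 : ZMod p) := invertibleOfNonzero h2
  have hcard' : Nat.card (Additive G) = Nat.card (ZMod p × ZMod p × ZMod p) := by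
    rw [Nat.card_congr Additive.toMul, hcard, Nat.card_prod, Nat.card_prod, Nat.card_zmod]
    ring
  obtain ⟨e⟩ := nonempty_addEquiv_of_card_eq (p := p) (fun a => hexp a.toMul)
    (fun b => by ext <;> simp) hcard'
  let E : G ≃ ZMod p × ZMod p × ZMod p := Additive.ofMul.trans e.toEquiv
  have hE : ∀ u v, adj (E u) (E v) ↔ cayAdj G {g | e (.ofMul g) ∈ conn _} u v :=
    fun u v => (cayAdj_preimage_iff e _ u v).symm
  obtain ⟨u, v, huv, hvu⟩ := exists_adj_not_adj (R := ZMod p)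
  refine ⟨{g | e (.ofMul g) ∈ conn _}, ?_, ⟨E.symm u, E.symm v, ?_, ?_⟩, ?_,
    skewTranslations.comap E.permCongrHom.toMonoidHom,
    comap_permCongrHom_le_dAut E hE skewTranslations_le_dAut,
    isRegularSub_skewTranslations.comap_permCongrHom E,
    Subgroup.not_comm_comap _ not_comm_skewTranslations⟩
  · simpa using zero_notMem_conn
  · simpa [← hE, E] using huv
  · simpa [← hE, E] using hvu
  · rw [index_cayleyRR_eq_card_stabilizer, card_stabilizer_dAut_congr E hE]
    simpa [E] using card_stabilizer_dAut_zero (n := p)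
end

section
/- Let G be a finite group generated by an involution x and an element y of order 3, with G not isomorphic to ℤ/6 and not isomorphic to ℤ₃ wr ℤ₂ ≅ (ℤ₃ × ℤ₃) ⋊ ℤ₂. Let S = {x, y, y^x} and Γ = Cay(G,S). Then Γ has Cayley index exactly 2. -/
/-- The coordinate-swap automorphism of `Z₃ × Z₃`. -/
def swapAut : MulAut (Multiplicative (ZMod 3) × Multiplicative (ZMod 3)) :=
  MulEquiv.prodComm

/-- The action of `Z₂` on `Z₃ × Z₃` by swapping coordinates. -/
def swapAction :
    Multiplicative (ZMod 2) →*
      MulAut (Multiplicative (ZMod 3) × Multiplicative (ZMod 3)) :=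
  AddMonoidHom.toMultiplicativeLeft
    (ZMod.lift 2 ⟨zmultiplesHom _ (Additive.ofMul swapAut), by
      have h : swapAut * swapAut = 1 := by ext z <;> rfl
      simp only [zmultiplesHom_apply]
      rw [show ((2 : ℕ) : ℤ) = (1 : ℤ) + 1 by norm_num, add_zsmul, one_zsmul,
        ← ofMul_mul, h, ofMul_one]⟩)

/-- The wreath product `Z₃ ≀ Z₂ ≅ (Z₃ × Z₃) ⋊ Z₂`. -/
abbrev Z3wrZ2 : Type :=
  (Multiplicative (ZMod 3) × Multiplicative (ZMod 3)) ⋊[swapAction]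
    Multiplicative (ZMod 2)

/-!
Write `b = x⁻¹ y x` and `S = {x, y, b}`. Conjugation by `x` fixes `x` and swaps `y` and `b`, so
it is an automorphism of `Γ` fixing `1`; it is not a right translation since `b ≠ y` (otherwise
`x` and `y` commute and `G ≅ ℤ₆`). As right translations act regularly, it remains to show that
an automorphism `σ` fixing `1` sends `y` into `{y, b}`, and is trivial if it fixes `y`.

Colour the arc `u → s u` by `s`. If `b ≠ y⁻¹`, the `x`-arcs are the arcs whose reverse is an
arc, so `σ` commutes with `u ↦ x u` and maps `y`- and `b`-arcs to `y`- or `b`-arcs; since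
`y³ = b³ = 1`, if `σ` preserves the colours of the arcs leaving `v`, it does so at `y v` and
`b v` too. If `b = y⁻¹`, `Γ` is undirected and the `x`-edges are those lying on no triangle.
In both cases colour preservation spreads from `1` along `S`, which generates `G` as a monoid,
so a `σ` fixing `1` and `y` commutes with every left multiplication and is the identity.
-/

section CayleyDigraph

variable {G : Type*} [Group G] {S : Set G} {σ : Equiv.Perm G}

theorem mulRight_mem_dAut_cayAdj (g : G) : Equiv.mulRight g ∈ dAut (cayAdj G S) := by
  intro u v
  simp [cayAdj, mul_assoc]

theorem conj_mem_dAut_cayAdj {g : G} (hS : ∀ s, g * s * g⁻¹ ∈ S ↔ s ∈ S) :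
    (MulAut.conj g).toEquiv ∈ dAut (cayAdj G S) := by
  intro u v
  simpa [cayAdj, mul_assoc] using hS (v * u⁻¹)

theorem exists_apply_mul_eq_mul_of_mem_dAut (hσ : σ ∈ dAut (cayAdj G S)) {s : G} (hs : s ∈ S)
    (u : G) : ∃ t ∈ S, (t⁻¹ ∈ S ↔ s⁻¹ ∈ S) ∧ σ (s * u) = t * σ u := by
  refine ⟨σ (s * u) * (σ u)⁻¹, (hσ u (s * u)).2 (by simpa [cayAdj]), ?_, by simp⟩
  simpa [cayAdj] using hσ (s * u) u

theorem apply_mul_eq_mul_of_inv_mem_iff (hσ : σ ∈ dAut (cayAdj G S)) {s : G} (hs : s ∈ S)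
    (hsymm : ∀ t ∈ S, t⁻¹ ∈ S ↔ t = s) (u : G) : σ (s * u) = s * σ u := by
  obtain ⟨t, ht, hinv, heq⟩ := exists_apply_mul_eq_mul_of_mem_dAut hσ hs u
  rwa [(hsymm t ht).1 (hinv.2 ((hsymm s hs).2 rfl))] at heq

/-- The arcs `u → s * u` are recognised as the arcs whose ends have no common out-neighbour. -/
theorem apply_mul_eq_mul_of_forall_mul_inv (hσ : σ ∈ dAut (cayAdj G S)) {s : G} (hs : s ∈ S)
    (hnone : ∀ r ∈ S, r * s⁻¹ ∉ S) (hall : ∀ t ∈ S, t ≠ s → ∃ r ∈ S, r * t⁻¹ ∈ S) (u : G) :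
    σ (s * u) = s * σ u := by
  obtain ⟨t, htS, -, ht⟩ := exists_apply_mul_eq_mul_of_mem_dAut hσ hs u
  by_contra hne
  obtain ⟨r, hrS, hrt⟩ := hall t htS fun h => hne (by rw [ht, h])
  set c := σ.symm (r * σ u)
  have hc : c * u⁻¹ ∈ S := (hσ u c).1 (by simpa [cayAdj, c] using hrS)
  have hc' : c * (s * u)⁻¹ ∈ S := (hσ (s * u) c).1 (by simpa [cayAdj, c, ht, mul_assoc] using hrt)
  exact hnone _ hc (by simpa [mul_assoc] using hc')

theorem mem_cayleyRR_iff {σ : dAut (cayAdj G S)} :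
    σ ∈ cayleyRR G S ↔ ∃ g, rightReg G g = σ := by
  simp [cayleyRR, Subgroup.mem_subgroupOf]

theorem eq_one_of_mem_cayleyRR {σ : dAut (cayAdj G S)} (hσ : σ ∈ cayleyRR G S)
    (h1 : (σ : Equiv.Perm G) 1 = 1) : σ = 1 := by
  obtain ⟨g, hg⟩ := mem_cayleyRR_iff.1 hσ
  have hg1 : g = 1 := by simpa [← hg, rightReg] using h1
  ext u
  simp [← hg, hg1]

theorem index_cayleyRR_eq_two {τ : Equiv.Perm G} (hτ : τ ∈ dAut (cayAdj G S)) (hτ1 : τ 1 = 1)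
    (hτne : τ ≠ 1) (hstab : ∀ σ ∈ dAut (cayAdj G S), σ 1 = 1 → σ = 1 ∨ σ = τ) :
    (cayleyRR G S).index = 2 := by
  set T : dAut (cayAdj G S) := ⟨τ, hτ⟩
  have hT : T ≠ 1 := fun h => hτne (congrArg Subtype.val h)
  have hstab' : ∀ σ : dAut (cayAdj G S), (σ : Equiv.Perm G) 1 = 1 → σ = 1 ∨ σ = T :=
    fun σ h1 => (hstab σ σ.2 h1).imp Subtype.ext Subtype.ext
  have hTT : T * T = 1 :=
    (hstab' (T * T) (by simp [T, hτ1])).resolve_right fun h => hT (mul_eq_right.1 h)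
  rw [Subgroup.index_eq_two_iff_exists_notMem_and]
  refine ⟨T, fun h => hT (eq_one_of_mem_cayleyRR h hτ1), fun σ => ?_⟩
  set ρ : dAut (cayAdj G S) := ⟨rightReg G ((σ : Equiv.Perm G) 1), mulRight_mem_dAut_cayAdj _⟩
  have hρ : ρ ∈ cayleyRR G S := mem_cayleyRR_iff.2 ⟨_, rfl⟩
  rcases hstab' (ρ * σ) (by simp [ρ, rightReg]) with h | h
  · right
    rw [eq_inv_of_mul_eq_one_right h]
    exact inv_mem hρ
  · left
    rw [eq_inv_mul_of_mul_eq h, mul_assoc, hTT, mul_one]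
    exact inv_mem hρ

theorem eq_one_or_eq_of_apply_one_eq_one {a b : G} {τ : Equiv.Perm G}
    (hτ : τ ∈ dAut (cayAdj G S)) (hτ1 : τ 1 = 1) (hτa : τ a = b) (hτb : τ b = a)
    (hrigid : ∀ σ ∈ dAut (cayAdj G S), σ 1 = 1 → σ a = a → σ = 1)
    (hmove : ∀ σ ∈ dAut (cayAdj G S), σ 1 = 1 → σ a = a ∨ σ a = b)
    (hσ : σ ∈ dAut (cayAdj G S)) (h1 : σ 1 = 1) : σ = 1 ∨ σ = τ := by
  refine (hmove σ hσ h1).imp (hrigid σ hσ h1) fun hσa => ?_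
  have hττ : τ * τ = 1 := hrigid _ (mul_mem hτ hτ) (by simp [hτ1]) (by simp [hτa, hτb])
  have hτσ : τ * σ = 1 := hrigid _ (mul_mem hτ hσ) (by simp [hτ1, h1]) (by simp [hσa, hτb])
  rw [eq_inv_of_mul_eq_one_right hτσ]
  exact (eq_inv_of_mul_eq_one_right hττ).symm

theorem apply_eq_self_of_forall_apply_mul_eq_mul (hS : Submonoid.closure S = ⊤) {f : G → G}
    (Q : G → Prop) (h1 : f 1 = 1) (hQ1 : Q 1)
    (hQ : ∀ v, Q v → ∀ s ∈ S, Q (s * v) ∧ f (s * v) = s * f v) (g : G) : f g = g := by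
  have key : ∀ g ∈ Submonoid.closure S, Q g ∧ f g = g := by
    intro g hg
    induction hg using Submonoid.closure_induction_left with
    | one => exact ⟨hQ1, h1⟩
    | mul_left s hs v _ ih =>
      obtain ⟨hQv, hfv⟩ := hQ v ih.1 s hs
      exact ⟨hQv, by rw [hfv, ih.2]⟩
  exact (key g (hS ▸ Submonoid.mem_top g)).2

end CayleyDigraph

section GroupFacts

variable {G : Type*} [Group G] {x a : G}

theorem inv_ne_self_of_orderOf_eq_three {g : G} (hg : orderOf g = 3) : g⁻¹ ≠ g := by
  intro h
  have h2 : g ^ 2 = 1 := by rw [sq, mul_eq_one_iff_eq_inv, h]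
  have := orderOf_dvd_of_pow_eq_one h2
  rw [hg] at this
  norm_num at this

theorem orderOf_inv_mul_mul (x a : G) : orderOf (x⁻¹ * a * x) = orderOf a := by
  simpa using MulEquiv.orderOf_eq (MulAut.conj x⁻¹) a

theorem nonempty_mulEquiv_zmod_six_of_commute {y : G} (hx : orderOf x = 2) (hy : orderOf y = 3)
    (hgen : Subgroup.closure {x, y} = ⊤) (hxy : Commute x y) :
    Nonempty (G ≃* Multiplicative (ZMod 6)) := by
  have hx2 : x ^ 2 = 1 := hx ▸ pow_orderOf_eq_one x
  have hy3 : y ^ 3 = 1 := hy ▸ pow_orderOf_eq_one y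
  have h3 : (x * y) ^ 3 = x := by rw [hxy.mul_pow, hy3, mul_one, pow_succ, hx2, one_mul]
  have h4 : (x * y) ^ 4 = y := by
    rw [hxy.mul_pow, pow_succ y 3, hy3, one_mul, show 4 = 2 * 2 from rfl, pow_mul, hx2, one_pow,
      one_mul]
  have hgen' : ∀ g, g ∈ Subgroup.zpowers (x * y) := by
    refine fun g => (Subgroup.closure_le _).2 ?_ (hgen ▸ Subgroup.mem_top g)
    exact Set.pair_subset (by simpa [h3] using Subgroup.npow_mem_zpowers (x * y) 3)
      (by simpa [h4] using Subgroup.npow_mem_zpowers (x * y) 4)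
  have hcard : Nat.card G = 6 := by
    rw [← orderOf_eq_card_of_forall_mem_zpowers hgen',
      hxy.orderOf_mul_eq_mul_orderOf_of_coprime (by rw [hx, hy]; norm_num), hx, hy]
  exact ⟨(zmodMulEquivOfGenerator hgen' hcard).symm⟩

theorem submonoid_closure_triple_eq_top (hx : orderOf x = 2) (ha : orderOf a = 3)
    (hgen : Subgroup.closure {x, a} = ⊤) : Submonoid.closure {x, a, x⁻¹ * a * x} = ⊤ := by
  rw [eq_top_iff, ← Subgroup.top_toSubmonoid, ← hgen,
    Subgroup.closure_toSubmonoid_of_isOfFinOrder]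
  · exact Submonoid.closure_mono (Set.insert_subset_insert (by simp))
  · rintro g (rfl | rfl) <;> apply orderOf_pos_iff.1 <;> simp [hx, ha]

theorem conj_mem_triple_iff (hx : orderOf x = 2) (s : G) :
    x * s * x⁻¹ ∈ ({x, a, x⁻¹ * a * x} : Set G) ↔ s ∈ ({x, a, x⁻¹ * a * x} : Set G) := by
  have hconj : ∀ t, x * s * x⁻¹ = t ↔ s = x⁻¹ * t * x := fun t => by
    constructor <;> rintro rfl <;> group
  have hxx : x * x = 1 := by rw [← sq, ← hx, pow_orderOf_eq_one]
  simp only [Set.mem_insert_iff, Set.mem_singleton_iff]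
  simp only [hconj]
  simp only [inv_eq_self_of_orderOf_eq_two hx, mul_assoc, hxx, mul_one, ← mul_assoc x x, one_mul]
  tauto

end GroupFacts

section TwoColours

variable {G : Type*} [Group G] {σ : Equiv.Perm G} {a b : G}

theorem apply_mul_mul_eq_of_apply_mul_eq_or (ha : a ^ 3 = 1) (hb : b ^ 3 = 1) (hab : a ≠ b)
    (hσ : ∀ t, t = a ∨ t = b → ∀ u, σ (t * u) = a * σ u ∨ σ (t * u) = b * σ u) {v : G}
    (hva : σ (a * v) = a * σ v) :
    σ (a * (a * v)) = a * (a * σ v) ∧ σ (b * (a * v)) = b * (a * σ v) := by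
  rw [pow_three'] at ha hb
  have haa : σ (a * (a * v)) = a * (a * σ v) := by
    rcases hσ a (.inl rfl) (a * v) with h | h
    · rwa [hva] at h
    -- the arc from `a * (a * v)` back to `v` also has colour `a` or `b`
    have hv : a * (a * (a * v)) = v := by rw [← mul_assoc, ← mul_assoc, ha, one_mul]
    rw [hva] at h
    rcases hσ a (.inl rfl) (a * (a * v)) with h' | h' <;> rw [hv, h] at h'
    · have hbaa : a * b * a = a * a * a := by rw [ha]; simpa [← mul_assoc] using h'
      exact absurd (mul_left_cancel (mul_right_cancel hbaa)).symm hab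
    · have hbba : b * b * a = b * b * b := by rw [hb]; simpa [← mul_assoc] using h'
      exact absurd (mul_left_cancel hbba) hab
  refine ⟨haa, ?_⟩
  rcases hσ b (.inr rfl) (a * v) with h | h
  · rw [hva, ← haa] at h
    exact absurd (mul_right_cancel (σ.injective h)) hab.symm
  · rwa [hva] at h

end TwoColours

section ConjNeInv

variable {G : Type*} [Group G] {σ : Equiv.Perm G} {x a : G}

theorem inv_mem_iff_eq_of_orderOf {b : G} (hx : orderOf x = 2) (ha : orderOf a = 3)
    (hb : orderOf b = 3) (hba : b ≠ a⁻¹) {t : G} (ht : t ∈ ({x, a, b} : Set G)) :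
    t⁻¹ ∈ ({x, a, b} : Set G) ↔ t = x := by
  have ne_x : ∀ g : G, orderOf g = 3 → g ≠ x := fun g hg =>
    ne_of_apply_ne orderOf (by simp [hg, hx])
  obtain ht | ht | ht := ht <;> subst t
  · simp [inv_eq_self_of_orderOf_eq_two hx]
  · simp [inv_ne_self_of_orderOf_eq_three ha, ne_x a ha, ne_x a⁻¹ (by simpa using ha), hba.symm]
  · simp [inv_ne_self_of_orderOf_eq_three hb, ne_x b hb, ne_x b⁻¹ (by simpa using hb),
      inv_eq_iff_eq_inv, hba]

theorem apply_mul_eq_or_of_conj_ne_inv (hx : orderOf x = 2) (ha : orderOf a = 3)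
    (hba : x⁻¹ * a * x ≠ a⁻¹) (hσ : σ ∈ dAut (cayAdj G {x, a, x⁻¹ * a * x})) (t : G)
    (ht : t = a ∨ t = x⁻¹ * a * x) (u : G) :
    σ (t * u) = a * σ u ∨ σ (t * u) = x⁻¹ * a * x * σ u := by
  have hb := (orderOf_inv_mul_mul x a).trans ha
  have htS : t ∈ ({x, a, x⁻¹ * a * x} : Set G) := by rcases ht with rfl | rfl <;> simp
  have htx : t ≠ x := by
    rcases ht with rfl | rfl <;> exact ne_of_apply_ne orderOf (by simp [ha, hb, hx])
  obtain ⟨t', ht'S, hinv, heq⟩ := exists_apply_mul_eq_mul_of_mem_dAut hσ htS u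
  rw [inv_mem_iff_eq_of_orderOf hx ha hb hba ht'S, inv_mem_iff_eq_of_orderOf hx ha hb hba htS]
    at hinv
  obtain rfl | ht' | ht' := ht'S
  · exact absurd (hinv.1 rfl) htx
  · exact .inl (ht' ▸ heq)
  · exact .inr (ht' ▸ heq)

theorem eq_one_of_conj_ne_inv (hx : orderOf x = 2) (ha : orderOf a = 3)
    (hba : x⁻¹ * a * x ≠ a) (hba' : x⁻¹ * a * x ≠ a⁻¹)
    (hS : Submonoid.closure {x, a, x⁻¹ * a * x} = ⊤)
    (hσ : σ ∈ dAut (cayAdj G {x, a, x⁻¹ * a * x})) (h1 : σ 1 = 1) (hσa : σ a = a) : σ = 1 := by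
  have hb := (orderOf_inv_mul_mul x a).trans ha
  set b := x⁻¹ * a * x with hb_def
  have hxS : ∀ u, σ (x * u) = x * σ u :=
    apply_mul_eq_mul_of_inv_mem_iff hσ (by simp) fun t ht =>
      inv_mem_iff_eq_of_orderOf hx ha hb hba' ht
  have hcol := apply_mul_eq_or_of_conj_ne_inv hx ha hba' hσ
  have hcol' : ∀ t, t = b ∨ t = a → ∀ u, σ (t * u) = b * σ u ∨ σ (t * u) = a * σ u :=
    fun t ht u => (hcol t ht.symm u).symm
  have hσb : σ b = b := by
    rcases hcol b (.inr rfl) 1 with h | h <;> simp only [mul_one, h1] at h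
    · exact absurd (σ.injective (h.trans hσa.symm)) hba
    · exact h
  have hxb : x * b = a * x := by simp [hb_def, ← mul_assoc]
  have hbx : b * x = x * a := by
    rw [hb_def, mul_assoc, ← sq, ← hx, pow_orderOf_eq_one, mul_one,
      inv_eq_self_of_orderOf_eq_two hx]
  refine Equiv.ext (apply_eq_self_of_forall_apply_mul_eq_mul hS
    (fun v => σ (a * v) = a * σ v ∧ σ (b * v) = b * σ v) h1 (by simp [h1, hσa, hσb]) ?_)
  rintro v ⟨hva, hvb⟩ s hs
  obtain ⟨haav, hbav⟩ := apply_mul_mul_eq_of_apply_mul_eq_or (ha ▸ pow_orderOf_eq_one a)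
    (hb ▸ pow_orderOf_eq_one b) (Ne.symm hba) hcol hva
  obtain ⟨hbbv, habv⟩ := apply_mul_mul_eq_of_apply_mul_eq_or (hb ▸ pow_orderOf_eq_one b)
    (ha ▸ pow_orderOf_eq_one a) hba hcol' hvb
  obtain hs | hs | hs := hs <;> subst s
  · refine ⟨⟨?_, ?_⟩, hxS v⟩
    · rw [← mul_assoc, ← hxb, mul_assoc, hxS, hvb, hxS, ← mul_assoc, hxb, mul_assoc]
    · rw [← mul_assoc, hbx, mul_assoc, hxS, hva, hxS, ← mul_assoc, ← hbx, mul_assoc]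
  · exact ⟨⟨by rw [haav, hva], by rw [hbav, hva]⟩, hva⟩
  · exact ⟨⟨by rw [habv, hvb], by rw [hbbv, hvb]⟩, hvb⟩

end ConjNeInv

section ConjEqInv

variable {G : Type*} [Group G] {σ : Equiv.Perm G} {x a : G}

theorem apply_mul_eq_mul_of_conj_eq_inv (hx : orderOf x = 2) (ha : orderOf a = 3)
    (hba : x⁻¹ * a * x = a⁻¹) (hσ : σ ∈ dAut (cayAdj G {x, a, x⁻¹ * a * x})) (u : G) :
    σ (x * u) = x * σ u := by
  rw [hba] at hσ
  have hx' : x⁻¹ = x := inv_eq_self_of_orderOf_eq_two hx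
  have haa : a * a = a⁻¹ := by
    rw [eq_inv_iff_mul_eq_one, ← pow_three', ← ha, pow_orderOf_eq_one]
  have haa' : a⁻¹ * a⁻¹ = a := by rw [← mul_inv_rev, haa, inv_inv]
  have hxx : x * x = 1 := by rw [← sq, ← hx, pow_orderOf_eq_one]
  have hx1 : x ≠ 1 := by rintro rfl; simp at hx
  have ha1 : a ≠ 1 := by rintro rfl; simp at ha
  have hax : a ≠ x := ne_of_apply_ne orderOf (by simp [ha, hx])
  have haix : a⁻¹ ≠ x := ne_of_apply_ne orderOf (by simp [ha, hx])
  refine apply_mul_eq_mul_of_forall_mul_inv hσ (by simp) ?_ ?_ u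
  · intro r hr
    obtain hr | hr | hr := hr <;> subst r <;> rw [hx'] <;>
      simp [hxx, ← eq_inv_mul_iff_mul_eq, haa, haa', hx1, ha1, hax.symm, haix.symm,
        eq_comm (a := (1 : G))]
  · intro t ht htx
    obtain ht | ht | ht := ht <;> subst t
    · exact absurd rfl htx
    · exact ⟨a⁻¹, by simp, by rw [haa']; simp⟩
    · exact ⟨a, by simp, by simp [haa]⟩

theorem apply_eq_or_of_conj_eq_inv (hx : orderOf x = 2) (ha : orderOf a = 3)
    (hba : x⁻¹ * a * x = a⁻¹) (hσ : σ ∈ dAut (cayAdj G {x, a, x⁻¹ * a * x})) (h1 : σ 1 = 1) :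
    σ a = a ∨ σ a = x⁻¹ * a * x := by
  obtain ⟨t, htS, -, ht⟩ := exists_apply_mul_eq_mul_of_mem_dAut hσ (s := a) (by simp) 1
  rw [mul_one, h1, mul_one] at ht
  obtain htS | htS | htS := htS <;> rw [htS] at ht
  · have hσx : σ x = x := by simpa [h1] using apply_mul_eq_mul_of_conj_eq_inv hx ha hba hσ 1
    exact absurd (σ.injective (ht.trans hσx.symm)) (ne_of_apply_ne orderOf (by simp [ha, hx]))
  · exact .inl ht
  · exact .inr ht

theorem eq_one_of_conj_eq_inv (hx : orderOf x = 2) (ha : orderOf a = 3)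
    (hba : x⁻¹ * a * x = a⁻¹) (hS : Submonoid.closure {x, a, x⁻¹ * a * x} = ⊤)
    (hσ : σ ∈ dAut (cayAdj G {x, a, x⁻¹ * a * x})) (h1 : σ 1 = 1) (hσa : σ a = a) : σ = 1 := by
  have hxS := apply_mul_eq_mul_of_conj_eq_inv hx ha hba hσ
  rw [hba] at hS hσ
  have hax : a * x = x * a⁻¹ := by rw [← hba]; group
  have haa : ∀ g, a * (a * g) = a⁻¹ * g := fun g => by
    rw [← mul_assoc, eq_inv_mul_iff_mul_eq, ← mul_assoc, ← mul_assoc, ← pow_three', ← ha,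
      pow_orderOf_eq_one, one_mul]
  refine Equiv.ext (apply_eq_self_of_forall_apply_mul_eq_mul hS (fun v => σ (a * v) = a * σ v) h1
    (by simp [h1, hσa]) ?_)
  intro v hva s hs
  have haiv : σ (a⁻¹ * v) = a⁻¹ * σ v := by
    obtain ⟨t, htS, -, ht⟩ := exists_apply_mul_eq_mul_of_mem_dAut hσ (s := a) (by simp) (a * v)
    rw [hva, haa] at ht
    obtain htS | htS | htS := htS <;> subst t
    · rw [← hva, ← hxS, ← haa, ← mul_assoc, ← mul_assoc] at ht
      exact absurd (mul_right_cancel (mul_right_cancel (σ.injective ht)))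
        (ne_of_apply_ne orderOf (by simp [ha, hx]))
    · rwa [haa] at ht
    · rw [inv_mul_cancel_left] at ht
      have ha1 : a = 1 := inv_eq_one.1 (mul_eq_right.1 (σ.injective ht))
      simp [ha1] at ha
  obtain hs | hs | hs := hs <;> subst s
  · refine ⟨?_, hxS v⟩
    rw [← mul_assoc, hax, mul_assoc, hxS, haiv, ← mul_assoc, ← hax, mul_assoc, hxS]
  · exact ⟨by rw [haa, haiv, hva, haa], hva⟩
  · exact ⟨by rw [mul_inv_cancel_left, haiv, mul_inv_cancel_left], haiv⟩

end ConjEqInv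

section Stabilizer

variable {G : Type*} [Group G] {σ : Equiv.Perm G} {x a : G}

theorem eq_one_of_apply_one_of_apply_self (hx : orderOf x = 2) (ha : orderOf a = 3)
    (hba : x⁻¹ * a * x ≠ a) (hS : Submonoid.closure {x, a, x⁻¹ * a * x} = ⊤)
    (hσ : σ ∈ dAut (cayAdj G {x, a, x⁻¹ * a * x})) (h1 : σ 1 = 1) (hσa : σ a = a) : σ = 1 := by
  by_cases hinv : x⁻¹ * a * x = a⁻¹
  · exact eq_one_of_conj_eq_inv hx ha hinv hS hσ h1 hσa
  · exact eq_one_of_conj_ne_inv hx ha hba hinv hS hσ h1 hσa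

theorem apply_eq_self_or_apply_eq_conj (hx : orderOf x = 2) (ha : orderOf a = 3)
    (hσ : σ ∈ dAut (cayAdj G {x, a, x⁻¹ * a * x})) (h1 : σ 1 = 1) :
    σ a = a ∨ σ a = x⁻¹ * a * x := by
  by_cases hinv : x⁻¹ * a * x = a⁻¹
  · exact apply_eq_or_of_conj_eq_inv hx ha hinv hσ h1
  · simpa [h1] using apply_mul_eq_or_of_conj_ne_inv hx ha hinv hσ a (.inl rfl) 1

end Stabilizer

theorem stmt_16_general {G : Type*} [Group G]
    (x y : G) (hx : orderOf x = 2) (hy : orderOf y = 3)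
    (hgen : Subgroup.closure {x, y} = ⊤)
    (h6 : ¬ Nonempty (G ≃* Multiplicative (ZMod 6))) :
    (cayleyRR G {x, y, x⁻¹ * y * x}).index = 2 := by
  have hb : x⁻¹ * y * x ≠ y := fun h => h6 <| nonempty_mulEquiv_zmod_six_of_commute hx hy hgen <|
    by rw [mul_assoc, inv_mul_eq_iff_eq_mul] at h; exact h.symm
  have hS := submonoid_closure_triple_eq_top hx hy hgen
  set τ := (MulAut.conj x).toEquiv
  have hτ : τ ∈ dAut (cayAdj G {x, y, x⁻¹ * y * x}) := conj_mem_dAut_cayAdj (conj_mem_triple_iff hx)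
  have hτ1 : τ 1 = 1 := by simp [τ]
  have hτy : τ y = x⁻¹ * y * x := by simp [τ, inv_eq_self_of_orderOf_eq_two hx]
  have hτb : τ (x⁻¹ * y * x) = y := by simp [τ, mul_assoc]
  refine index_cayleyRR_eq_two hτ hτ1 (fun h => hb (by simpa [h] using hτy.symm)) ?_
  exact fun σ hσ h1 => eq_one_or_eq_of_apply_one_eq_one hτ hτ1 hτy hτb
    (fun _ => eq_one_of_apply_one_of_apply_self hx hy hb hS)
    (fun _ => apply_eq_self_or_apply_eq_conj hx hy) hσ h1

/-- If `G` is generated by an involution `x` and an element `y` of order 3, and `G` is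
isomorphic to neither `ℤ/6` nor `ℤ₃ ≀ ℤ₂`, then `Cay(G, {x, y, y^x})` has Cayley
index exactly 2. -/
theorem stmt_16 {G : Type*} [Group G] [Fintype G]
    (x y : G) (hx : orderOf x = 2) (hy : orderOf y = 3)
    (hgen : Subgroup.closure {x, y} = ⊤)
    (h6 : ¬ Nonempty (G ≃* Multiplicative (ZMod 6)))
    (hwr : ¬ Nonempty (G ≃* Z3wrZ2)) :
    (cayleyRR G {x, y, x⁻¹ * y * x}).index = 2 :=
  stmt_16_general x y hx hy hgen h6
end
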